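/- Let p = max(P(00), P(11)) and q = min(P(00), P(11)) for an n-integral stationary Markov chain P on a primitive subgraph G of D_{1,2} assigning positive probability to all its edges. For any n-tuple r with n₁ = π(0)n occurrences of 0 and n₂ = π(1)n occurrences of 1, there exists a (G,P,n)-array with Z+1 rows whose first row is r and whose last row is the left cyclic shift of U_π, where Z = max(2(2+⌈(P(10)+q−p)/p⌉), 2(1+⌈q/(2P(01))⌉)). -/

import Mathlib

/-!
Track only the mismatch `m = #{j | s j = 1, t j = 0}` between the current row `s` and the target
row `t`. A row with the right number of zeros can be turned in one step into any row obtained by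
flipping `α` of its `(0,0)`-columns, `a - α` of its `(0,1)`-columns, `β` of its `(1,0)`-columns and
`a - β` of its `(1,1)`-columns (columns of `(s, t)`, `a = P(01)n`); this realises exactly the edge
counts `P(e)n`, and changes the mismatch to `m - β + α`. Two such steps lower the mismatch by
`min(2a, (p + q)n)` (or to `0`), while initially `m ≤ (P(01) + q)n`; the choice of `Z` makes
`Z/2` rounds of two steps enough to reach mismatch `0`, i.e. the row `t`.
-/

/-- A directed graph on `{0,1}` (given by its edge set `E`) is primitive if for all
sufficiently large `N`, between every ordered pair of vertices there is a directed
path of length exactly `N`. -/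
def IsPrimitive (E : Set (Bool × Bool)) : Prop :=
  ∃ N₀ : ℕ, ∀ N ≥ N₀, ∀ u v : Bool, ∃ f : ℕ → Bool,
    f 0 = u ∧ f N = v ∧ ∀ i < N, (f i, f (i + 1)) ∈ E

open Finset

theorem IsPrimitive.mem_of_ne {E : Set (Bool × Bool)} (hE : IsPrimitive E) {u v : Bool}
    (huv : u ≠ v) : (u, v) ∈ E := by
  obtain rfl : v = !u := Bool.eq_not.mpr huv.symm
  obtain ⟨N, hN⟩ := hE
  obtain ⟨f, hf0, hfN, hf⟩ := hN N le_rfl u (!u)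
  by_contra huvE
  have hconst : ∀ i ≤ N, f i = u := by
    intro i hi
    induction i with
    | zero => exact hf0
    | succ i ih =>
      have hedge := hf i (by omega)
      rw [ih (by omega)] at hedge
      by_contra hne
      exact huvE (Bool.eq_not.mpr hne ▸ hedge)
  exact huv (hconst N le_rfl ▸ hfN)

theorem IsPrimitive.exists_loop {E : Set (Bool × Bool)} (hE : IsPrimitive E) :
    ∃ u, (u, u) ∈ E := by
  by_contra! hloop
  obtain ⟨N, hN⟩ := hE
  obtain ⟨f, hf0, hfN, hf⟩ := hN (2 * N + 1) (by omega) false false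
  have halt : ∀ i ≤ 2 * N + 1, f i = i.bodd := by
    intro i hi
    induction i with
    | zero => simpa using hf0
    | succ i ih =>
      have hne : f (i + 1) ≠ f i := fun h => hloop _ (h ▸ hf i (by omega))
      rw [ih (by omega)] at hne
      rw [Nat.bodd_succ]
      exact Bool.eq_not.mpr hne
  have := halt _ le_rfl
  simp [hfN] at this

theorem exists_mask_card_eq {α ι : Type*} [Fintype α] [DecidableEq ι] (κ : α → ι) (k : ι → ℕ)
    (hk : ∀ i, k i ≤ #{x | κ x = i}) : ∃ φ : α → Bool, ∀ i, #{x | φ x ∧ κ x = i} = k i := by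
  classical
  choose G hGsub hGcard using fun i => exists_subset_card_eq (hk i)
  have hκ : ∀ i, ∀ x ∈ G i, κ x = i := fun i x hx => (mem_filter.1 (hGsub i hx)).2
  refine ⟨fun x => decide (x ∈ G (κ x)), fun i => ?_⟩
  rw [← hGcard i]
  congr 1
  ext x
  simp only [mem_filter, mem_univ, true_and, decide_eq_true_eq]
  exact ⟨fun ⟨hx, hxi⟩ => hxi ▸ hx, fun hx => ⟨(hκ i x hx).symm ▸ hx, hκ i x hx⟩⟩

namespace MarkovArray

variable {ι : Type*} [Fintype ι]

def rowCount (s : ι → Bool) (b : Bool) : ℕ := #{j | s j = b}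

def edgeCount (s s' : ι → Bool) (e : Bool × Bool) : ℕ := #{j | (s j, s' j) = e}

def IsStep (w : Bool × Bool → ℕ) (s s' : ι → Bool) : Prop := ∀ e, edgeCount s s' e = w e

theorem rowCount_false_add_true (s : ι → Bool) :
    rowCount s false + rowCount s true = Fintype.card ι := by
  simpa [rowCount] using card_filter_add_card_filter_not (s := univ) (fun j => s j = false)

theorem edgeCount_add_snd (s s' : ι → Bool) (b : Bool) :
    edgeCount s s' (b, false) + edgeCount s s' (b, true) = rowCount s b := by
  simp only [edgeCount, rowCount, card_filter, ← sum_add_distrib]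
  refine sum_congr rfl fun j _ => ?_
  cases s j <;> cases s' j <;> cases b <;> rfl

theorem edgeCount_add_fst (s s' : ι → Bool) (c : Bool) :
    edgeCount s s' (false, c) + edgeCount s s' (true, c) = rowCount s' c := by
  simp only [edgeCount, rowCount, card_filter, ← sum_add_distrib]
  refine sum_congr rfl fun j _ => ?_
  cases s j <;> cases s' j <;> cases c <;> rfl

theorem edgeCount_le_min (s t : ι → Bool) :
    edgeCount s t (true, false) ≤ min (rowCount s true) (rowCount t false) :=
  le_min (Nat.le.intro (edgeCount_add_snd s t true))
    (Nat.le.intro (by rw [add_comm]; exact edgeCount_add_fst s t false))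

theorem exists_flip (s t : ι → Bool) {a α β : ℕ} (hα : α ≤ a) (hβ : β ≤ a)
    (h00 : α ≤ edgeCount s t (false, false)) (h01 : a - α ≤ edgeCount s t (false, true))
    (h10 : β ≤ edgeCount s t (true, false)) (h11 : a - β ≤ edgeCount s t (true, true)) :
    ∃ s', edgeCount s s' (false, true) = a ∧ edgeCount s s' (true, false) = a ∧
      edgeCount s' t (true, false) + β = edgeCount s t (true, false) + α := by
  let k : Bool × Bool → ℕ
    | (false, false) => α | (false, true) => a - α | (true, false) => β | (true, true) => a - β
  obtain ⟨φ, hφ⟩ := exists_mask_card_eq (fun j => (s j, t j)) k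
    (by rintro ⟨_ | _, _ | _⟩ <;> assumption)
  have hcount : ∀ b c, #{j | φ j ∧ (s j, t j) = (b, c)} = k (b, c) := fun b c => hφ (b, c)
  refine ⟨fun j => xor (s j) (φ j), ?_, ?_, ?_⟩
  · calc _ = #{j | φ j ∧ (s j, t j) = (false, false)} +
          #{j | φ j ∧ (s j, t j) = (false, true)} := by
          simp only [edgeCount, card_filter, ← sum_add_distrib]
          refine sum_congr rfl fun j _ => ?_
          cases s j <;> cases t j <;> cases φ j <;> rfl
      _ = a := by rw [hcount, hcount]; exact Nat.add_sub_cancel' hα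
  · calc _ = #{j | φ j ∧ (s j, t j) = (true, false)} +
          #{j | φ j ∧ (s j, t j) = (true, true)} := by
          simp only [edgeCount, card_filter, ← sum_add_distrib]
          refine sum_congr rfl fun j _ => ?_
          cases s j <;> cases t j <;> cases φ j <;> rfl
      _ = a := by rw [hcount, hcount]; exact Nat.add_sub_cancel' hβ
  · show _ + k (true, false) = _ + k (false, false)
    rw [← hcount true false, ← hcount false false]
    simp only [edgeCount, card_filter, ← sum_add_distrib]
    refine sum_congr rfl fun j _ => ?_
    cases s j <;> cases t j <;> cases φ j <;> rfl

theorem IsStep.rowCount_false {w : Bool × Bool → ℕ} {s s' : ι → Bool} (h : IsStep w s s') :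
    rowCount s' false = w (false, false) + w (true, false) := by
  rw [← edgeCount_add_fst, h, h]

theorem eq_of_edgeCount_eq_zero {s t : ι → Bool} (hst : rowCount s false = rowCount t false)
    (h : edgeCount s t (true, false) = 0) : s = t := by
  have h' : edgeCount s t (false, true) = 0 := by
    have := edgeCount_add_snd s t false
    have := edgeCount_add_fst s t false
    omega
  rw [edgeCount, card_eq_zero, filter_eq_empty_iff] at h h'
  funext j
  have h₁ := h (mem_univ j)
  have h₂ := h' (mem_univ j)
  revert h₁ h₂
  cases s j <;> cases t j <;> decide

/- The mismatches `m - β + α` that `exists_flip` can reach from mismatch `m` when the rows have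
`a + c₁` zeros and `a + c₂` ones. -/
def MismatchStep (a c₁ c₂ m m' : ℕ) : Prop :=
  a - m ≤ m' ∧ m - a ≤ m' ∧ m' + (m - c₁) + (m - c₂) ≤ m + a

theorem exists_mismatchStep_two {a c₁ c₂ m K : ℕ} (h₁ : m ≤ a + c₁) (h₂ : m ≤ a + c₂)
    (hK : m ≤ K + min (2 * a) (c₁ + c₂)) :
    ∃ m₁ m₂, MismatchStep a c₁ c₂ m m₁ ∧ MismatchStep a c₁ c₂ m₁ m₂ ∧ m₂ ≤ K := by
  -- aim the first step near `a`, so that the second one can reach `|a - m₁|`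
  set m₁ := max ((a - m) + (m - a)) (a - min (a + min c₁ c₂) K)
  exact ⟨m₁, (a - m₁) + (m₁ - a), ⟨by omega, by omega, by omega⟩, ⟨by omega, by omega, by omega⟩,
    by omega⟩

variable {w : Bool × Bool → ℕ} {s t : ι → Bool}

theorem exists_isStep (hw : w (true, false) = w (false, true))
    (hcard : Fintype.card ι = w (false, false) + w (false, true) + w (true, false) + w (true, true))
    (hs : rowCount s false = w (false, false) + w (false, true))
    (ht : rowCount t false = w (false, false) + w (false, true)) {m' : ℕ}
    (hm' : MismatchStep (w (false, true)) (w (false, false)) (w (true, true))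
      (edgeCount s t (true, false)) m') :
    ∃ s', IsStep w s s' ∧ edgeCount s' t (true, false) = m' := by
  obtain ⟨h₁, h₂, h₃⟩ := hm'
  have := rowCount_false_add_true s
  have := edgeCount_add_snd s t false
  have := edgeCount_add_snd s t true
  have := edgeCount_add_fst s t false
  set a := w (false, true)
  set m := edgeCount s t (true, false)
  -- the least admissible `β`; then `α` is forced by `m' = m - β + α`
  set β := max (max (a - (w (true, true) + a - m)) (a - m')) (m - m')
  obtain ⟨s', h01, h10, hm⟩ := exists_flip s t (a := a) (α := β + m' - m) (β := β)
    (by omega) (by omega) (by omega) (by omega) (by omega) (by omega)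
  refine ⟨s', ?_, by omega⟩
  have := edgeCount_add_snd s s' false
  have := edgeCount_add_snd s s' true
  rintro ⟨_ | _, _ | _⟩ <;> omega

theorem exists_steps_of_mismatch_le (hw : w (true, false) = w (false, true))
    (hcard : Fintype.card ι = w (false, false) + w (false, true) + w (true, false) + w (true, true))
    (ht : rowCount t false = w (false, false) + w (false, true)) (k : ℕ) :
    ∀ s, rowCount s false = w (false, false) + w (false, true) →
      edgeCount s t (true, false) ≤
        k * min (2 * w (false, true)) (w (false, false) + w (true, true)) →
      ∃ A : ℕ → ι → Bool, A 0 = s ∧ A (2 * k) = t ∧ ∀ i < 2 * k, IsStep w (A i) (A (i + 1)) := by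
  induction k with
  | zero =>
    intro s hs hm
    exact ⟨fun _ => s, rfl, eq_of_edgeCount_eq_zero (hs.trans ht.symm) (by simpa using hm),
      by simp⟩
  | succ k ih =>
    intro s hs hm
    rw [Nat.succ_mul] at hm
    have := rowCount_false_add_true s
    have := edgeCount_le_min s t
    obtain ⟨m₁, m₂, hm₁, hm₂, hK⟩ := exists_mismatchStep_two (by omega) (by omega) hm
    obtain ⟨s₁, hs₁, rfl⟩ := exists_isStep hw hcard hs ht hm₁
    obtain ⟨s₂, hs₂, rfl⟩ := exists_isStep hw hcard (hw ▸ hs₁.rowCount_false) ht hm₂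
    obtain ⟨A, hA0, hAk, hA⟩ := ih s₂ (hw ▸ hs₂.rowCount_false) hK
    refine ⟨fun | 0 => s | 1 => s₁ | i + 2 => A i, rfl, hAk, ?_⟩
    rintro (_ | _ | i) hi
    · exact hs₁
    · simpa [hA0] using hs₂
    · exact hA i (by omega)

theorem exists_steps (hw : w (true, false) = w (false, true))
    (hcard : Fintype.card ι = w (false, false) + w (false, true) + w (true, false) + w (true, true))
    (ht : rowCount t false = w (false, false) + w (false, true))
    (hs : rowCount s false = w (false, false) + w (false, true)) {k : ℕ}
    (hk : w (false, true) + min (w (false, false)) (w (true, true)) ≤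
      k * min (2 * w (false, true)) (w (false, false) + w (true, true))) :
    ∃ A : ℕ → ι → Bool, A 0 = s ∧ A (2 * k) = t ∧ ∀ i < 2 * k, IsStep w (A i) (A (i + 1)) := by
  refine exists_steps_of_mismatch_le hw hcard ht k s hs ((edgeCount_le_min s t).trans ?_)
  have := rowCount_false_add_true s
  omega

theorem rowCount_leftShift_false {n n₁ : ℕ} (h : n₁ ≤ n) :
    rowCount (fun j : Fin n => decide (n₁ ≤ ((j : ℕ) + 1) % n)) false = n₁ := by
  rcases n with _ | n
  · simp [rowCount]
    omega
  · calc _ = #{j : Fin (n + 1) | (j : ℕ) < n₁} :=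
          card_equiv (finRotate _) (fun j => by simp [finRotate_apply, Fin.val_add])
      _ = n₁ := by rw [Fin.card_filter_val_lt, min_eq_right h]

theorem mem_of_edgeCount_eq {E : Set (Bool × Bool)} {P : Bool × Bool → ℝ} {c : ℝ}
    (hsupp : ∀ e ∉ E, P e = 0) (h : ∀ e, (edgeCount s t e : ℝ) = P e * c) (j : ι) :
    (s j, t j) ∈ E := by
  by_contra hj
  have hpos : 0 < edgeCount s t (s j, t j) := card_pos.2 ⟨j, by simp⟩
  have hzero := h (s j, t j)
  rw [hsupp _ hj, zero_mul, Nat.cast_eq_zero] at hzero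
  omega

end MarkovArray

theorem add_le_mul_min {a p q K : ℝ} (ha : 0 < a) (hp : 0 < p) (hq : 0 ≤ q)
    (hK₁ : 2 + (a + q - p) / p ≤ K) (hK₂ : 1 + q / (2 * a) ≤ K) :
    a + q ≤ K * min (2 * a) (p + q) := by
  rcases le_total (2 * a) (p + q) with h | h
  · rw [min_eq_left h]
    have := mul_le_mul_of_nonneg_right hK₂ (by positivity : (0 : ℝ) ≤ 2 * a)
    rw [add_mul, div_mul_cancel₀ _ (by positivity)] at this
    linarith
  · rw [min_eq_right h]
    have := mul_le_mul_of_nonneg_right hK₁ hp.le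
    rw [add_mul, div_mul_cancel₀ _ hp.ne'] at this
    nlinarith [div_nonneg hq (by positivity : (0 : ℝ) ≤ 2 * a)]

theorem add_min_le_toNat_mul_min {a c₁ c₂ : ℕ} {x y₁ y₂ c : ℝ} {K : ℤ} (hx : 0 < x)
    (hy : 0 < max y₁ y₂) (hy₁ : 0 ≤ y₁) (hy₂ : 0 ≤ y₂) (hc : 0 ≤ c)
    (ha : (a : ℝ) = x * c) (hc₁ : (c₁ : ℝ) = y₁ * c) (hc₂ : (c₂ : ℝ) = y₂ * c)
    (hK₁ : 2 + ⌈(x + min y₁ y₂ - max y₁ y₂) / max y₁ y₂⌉ ≤ K)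
    (hK₂ : 1 + ⌈min y₁ y₂ / (2 * x)⌉ ≤ K) :
    a + min c₁ c₂ ≤ K.toNat * min (2 * a) (c₁ + c₂) := by
  have hq : 0 ≤ min y₁ y₂ := le_min hy₁ hy₂
  have hceil₂ := Int.ceil_nonneg (div_nonneg hq (by positivity : 0 ≤ 2 * x))
  have hK : ((K.toNat : ℕ) : ℝ) = K := by exact_mod_cast Int.toNat_of_nonneg (by omega)
  have hKR₁ : 2 + (x + min y₁ y₂ - max y₁ y₂) / max y₁ y₂ ≤ K := by
    have := Int.le_ceil ((x + min y₁ y₂ - max y₁ y₂) / max y₁ y₂)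
    have : ((2 + ⌈(x + min y₁ y₂ - max y₁ y₂) / max y₁ y₂⌉ : ℤ) : ℝ) ≤ K := by exact_mod_cast hK₁
    push_cast at this
    linarith
  have hKR₂ : 1 + min y₁ y₂ / (2 * x) ≤ K := by
    have := Int.le_ceil (min y₁ y₂ / (2 * x))
    have : ((1 + ⌈min y₁ y₂ / (2 * x)⌉ : ℤ) : ℝ) ≤ K := by exact_mod_cast hK₂
    push_cast at this
    linarith
  have h := mul_le_mul_of_nonneg_right (add_le_mul_min hx hy hq hKR₁ hKR₂) hc
  rw [← Nat.cast_le (α := ℝ)]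
  push_cast
  calc (a : ℝ) + min (c₁ : ℝ) c₂ = (x + min y₁ y₂) * c := by
        rw [ha, hc₁, hc₂, ← min_mul_of_nonneg _ _ hc]; ring
    _ ≤ K * min (2 * x) (max y₁ y₂ + min y₁ y₂) * c := h
    _ = ((K.toNat : ℕ) : ℝ) * min (2 * (a : ℝ)) (c₁ + c₂) := by
        rw [ha, hc₁, hc₂, ← add_mul, add_comm (max _ _), min_add_max, mul_assoc,
          min_mul_of_nonneg _ _ hc, mul_assoc, hK]

theorem exists_natCast_eq {α : Type*} {P : α → ℝ} {c : ℝ} (hP : ∀ e, 0 ≤ P e) (hc : 0 ≤ c)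
    (hint : ∀ e, ∃ z : ℤ, P e * c = z) : ∃ w : α → ℕ, ∀ e, (w e : ℝ) = P e * c := by
  choose z hz using hint
  refine ⟨fun e => (z e).toNat, fun e => ?_⟩
  have hz0 : 0 ≤ z e := by exact_mod_cast hz e ▸ mul_nonneg (hP e) hc
  rw [hz]
  exact_mod_cast Int.toNat_of_nonneg hz0

open MarkovArray

theorem stmt15_general (E : Set (Bool × Bool)) (hprim : IsPrimitive E)
    (P : Bool × Bool → ℝ)
    (hpos : ∀ e ∈ E, 0 < P e) (hsupp : ∀ e ∉ E, P e = 0)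
    (hstat : ∀ u : Bool, P (u, false) + P (u, true) = P (false, u) + P (true, u))
    (n : ℕ) (hint : ∀ e, ∃ z : ℤ, P e * n = (z : ℝ))
    (n₁ n₂ : ℕ)
    (hn1 : (n₁ : ℝ) = (P (false, false) + P (false, true)) * n)
    (hn2 : (n₂ : ℝ) = (P (true, false) + P (true, true)) * n)
    (p q : ℝ)
    (hp : p = max (P (false, false)) (P (true, true)))
    (hq : q = min (P (false, false)) (P (true, true)))
    (Z : ℤ)
    (hZ : Z = max (2 * (2 + ⌈(P (true, false) + q - p) / p⌉))
                  (2 * (1 + ⌈q / (2 * P (false, true))⌉)))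
    (r : Fin n → Bool)
    (hr0 : (Finset.univ.filter (fun j => r j = false)).card = n₁)
    (hr1 : (Finset.univ.filter (fun j => r j = true)).card = n₂) :
    ∃ A : ℕ → Fin n → Bool,
      A 0 = r ∧
      (∀ j : Fin n, A Z.toNat j = decide (n₁ ≤ ((j : ℕ) + 1) % n)) ∧
      (∀ i < Z.toNat, ∀ j : Fin n, (A i j, A (i + 1) j) ∈ E) ∧
      (∀ i < Z.toNat, ∀ e : Bool × Bool,
        ((Finset.univ.filter (fun j => (A i j, A (i + 1) j) = e)).card : ℝ)
          = P e * n) := by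
  subst hp hq
  have hPnn : ∀ e, 0 ≤ P e := fun e =>
    (em (e ∈ E)).elim (fun he => (hpos e he).le) (fun he => (hsupp e he).ge)
  have hP01 : 0 < P (false, true) := hpos _ (hprim.mem_of_ne (by decide))
  have hP10 : P (true, false) = P (false, true) := by linarith [hstat false]
  have hloop : 0 < max (P (false, false)) (P (true, true)) := by
    obtain ⟨u | u, hu⟩ := hprim.exists_loop
    exacts [lt_max_of_lt_left (hpos _ hu), lt_max_of_lt_right (hpos _ hu)]
  obtain ⟨w, hw⟩ := exists_natCast_eq hPnn n.cast_nonneg hint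
  have hw10 : w (true, false) = w (false, true) :=
    Nat.cast_injective (R := ℝ) (by rw [hw, hw, hP10])
  have hn₁ : n₁ = w (false, false) + w (false, true) :=
    Nat.cast_injective (R := ℝ) (by rw [hn1, Nat.cast_add, hw, hw]; ring)
  have hn₂ : n₂ = w (true, false) + w (true, true) :=
    Nat.cast_injective (R := ℝ) (by rw [hn2, Nat.cast_add, hw, hw]; ring)
  have hn : n₁ + n₂ = n := by
    rw [← hr0, ← hr1]; exact (rowCount_false_add_true r).trans (Fintype.card_fin n)
  rw [hP10] at hZ
  obtain ⟨A, hA0, hAt, hA⟩ := exists_steps hw10 (by rw [Fintype.card_fin]; omega)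
    ((rowCount_leftShift_false (by omega)).trans hn₁) (hr0.trans hn₁) (k := (Z / 2).toNat)
    (add_min_le_toNat_mul_min hP01 hloop (hPnn _) (hPnn _) n.cast_nonneg (hw _) (hw _) (hw _)
      (by omega) (by omega))
  have hZK : Z.toNat = 2 * (Z / 2).toNat := by omega
  have hcount : ∀ i < Z.toNat, ∀ e, (edgeCount (A i) (A (i + 1)) e : ℝ) = P e * n := by
    intro i hi e
    rw [hA i (by omega) e, hw]
  exact ⟨A, hA0, fun j => by rw [hZK, hAt], fun i hi => mem_of_edgeCount_eq hsupp (hcount i hi),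
    hcount⟩

/-- Theorem 1: Let `p = max(P(00), P(11))`, `q = min(P(00), P(11))`
for an `n`-integral stationary Markov chain `P` (positive on all edges) on a
primitive subgraph of `D_{1,2}`, and let
`Z = max(2(2+⌈(P(10)+q−p)/p⌉), 2(1+⌈q/(2P(01))⌉))`.  For any `n`-tuple `r` with
`n₁ = π(0)n` zeros and `n₂ = π(1)n` ones, there is a `(G,P,n)`-array with `Z+1` rows
(each pair of consecutive rows containing each edge `e` exactly `P(e)n` times as a
column, all columns being paths in `G`) whose first row is `r` and whose last row is
the left cyclic shift of `U_π` (the row of `n₁` zeros followed by `n₂` ones). -/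
theorem stmt15 (E : Set (Bool × Bool)) (hprim : IsPrimitive E)
    (P : Bool × Bool → ℝ)
    (hpos : ∀ e ∈ E, 0 < P e) (hsupp : ∀ e ∉ E, P e = 0)
    (hsum : P (false, false) + P (false, true) + P (true, false) + P (true, true) = 1)
    (hstat : ∀ u : Bool, P (u, false) + P (u, true) = P (false, u) + P (true, u))
    (n : ℕ) (hn : 0 < n) (hint : ∀ e, ∃ z : ℤ, P e * n = (z : ℝ))
    (n₁ n₂ : ℕ)
    (hn1 : (n₁ : ℝ) = (P (false, false) + P (false, true)) * n)
    (hn2 : (n₂ : ℝ) = (P (true, false) + P (true, true)) * n)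
    (p q : ℝ)
    (hp : p = max (P (false, false)) (P (true, true)))
    (hq : q = min (P (false, false)) (P (true, true)))
    (Z : ℤ)
    (hZ : Z = max (2 * (2 + ⌈(P (true, false) + q - p) / p⌉))
                  (2 * (1 + ⌈q / (2 * P (false, true))⌉)))
    (r : Fin n → Bool)
    (hr0 : (Finset.univ.filter (fun j => r j = false)).card = n₁)
    (hr1 : (Finset.univ.filter (fun j => r j = true)).card = n₂) :
    ∃ A : ℕ → Fin n → Bool,
      A 0 = r ∧
      (∀ j : Fin n, A Z.toNat j = decide (n₁ ≤ ((j : ℕ) + 1) % n)) ∧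
      (∀ i < Z.toNat, ∀ j : Fin n, (A i j, A (i + 1) j) ∈ E) ∧
      (∀ i < Z.toNat, ∀ e : Bool × Bool,
        ((Finset.univ.filter (fun j => (A i j, A (i + 1) j) = e)).card : ℝ)
          = P e * n) :=
  stmt15_general E hprim P hpos hsupp hstat n hint n₁ n₂ hn1 hn2 p q hp hq Z hZ r hr0 hr1
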